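/- arXiv:2406.09338 — 2 statements merged into one kernel-verified Lean document; each statement's English description precedes it below -/
import Mathlib

section
/- Let α be a finite type with card α = n ≥ 2, and let p, q : α → ℝ be probability vectors (p i ≥ 0, q i ≥ 0, Σ_i p i = Σ_i q i = 1). Define the entropy H(p) = Σ_i (−p i · log(p i)) (with the convention 0·log 0 = 0, i.e. using negMulLog). If Σ_i |p i − q i| ≤ δ for some δ with 0 ≤ δ ≤ 1/2, then |H(p) − H(q)| ≤ √(δ·n). -/
/-!
Write `η = negMulLog`. By concavity of `η`, an increment `η (a + t) - η a` with
`0 ≤ a ≤ a + t ≤ 1` lies between `η 1 - η (1 - t)` and `η t - η 0`, and `η (1 - t) ≤ η t` for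
`t ≤ 1/2`; hence `|η a - η b| ≤ η |a - b|`. Summing, `η x ≤ √x` and Cauchy–Schwarz give
`∑ η tᵢ ≤ √(n ∑ tᵢ)`.
-/
open Real Finset

lemma ConcaveOn.map_add_sub_map_le {𝕜 : Type*} [Field 𝕜] [LinearOrder 𝕜] [IsStrictOrderedRing 𝕜]
    {s : Set 𝕜} {f : 𝕜 → 𝕜} (hf : ConcaveOn 𝕜 s f) {x y t : 𝕜} (hx : x ∈ s) (hyt : y + t ∈ s)
    (hxy : x ≤ y) (ht : 0 ≤ t) : f (y + t) - f y ≤ f (x + t) - f x := by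
  rcases (show 0 ≤ y + t - x by linarith).eq_or_lt with hd | hd
  · obtain rfl : x = y := by linarith
    obtain rfl : t = 0 := by linarith
    simp
  -- `y` and `x + t` are the convex combinations of `x` and `y + t` with weights `(a, b)`, `(b, a)`
  obtain ⟨a, ha0, ha⟩ : ∃ a, 0 ≤ a ∧ a = t / (y + t - x) := ⟨_, by positivity, rfl⟩
  obtain ⟨b, hb0, hb⟩ : ∃ b, 0 ≤ b ∧ b = (y - x) / (y + t - x) :=
    ⟨_, div_nonneg (sub_nonneg.2 hxy) hd.le, rfl⟩
  have hab : a + b = 1 := by rw [ha, hb]; field_simp; ring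
  have hy : a • x + b • (y + t) = y := by
    rw [ha, hb, smul_eq_mul, smul_eq_mul]; field_simp; ring
  have hxt : b • x + a • (y + t) = x + t := by
    rw [ha, hb, smul_eq_mul, smul_eq_mul]; field_simp; ring
  have hfy := hy ▸ hf.2 hx hyt ha0 hb0 hab
  have hfxt := hxt ▸ hf.2 hx hyt hb0 ha0 ((add_comm _ _).trans hab)
  simp only [smul_eq_mul] at hfy hfxt
  linear_combination hfy + hfxt - (f x + f (y + t)) * hab

lemma negMulLog_one_sub_le {t : ℝ} (h0 : 0 ≤ t) (h1 : t ≤ 1 / 2) :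
    negMulLog (1 - t) ≤ negMulLog t := by
  rcases h0.eq_or_lt with rfl | ht
  · simp
  set s := 1 - t
  have hs : 0 < s := by linarith
  have hA : -(s * log s) ≤ t := by linarith [self_sub_one_le_mul_log hs.le]
  have hB : s - t ≤ s * (log s - log t) := by
    have h := mul_le_mul_of_nonneg_left (log_le_sub_one_of_pos (div_pos ht hs)) hs.le
    rw [log_div ht.ne' hs.ne', mul_sub_one, mul_div_cancel₀ _ hs.ne'] at h
    linarith
  -- `s η(s) = (s - t)(-s log s) + t(-s log s) ≤ (s - t) t + t(-s log s) ≤ s η(t)`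
  refine le_of_mul_le_mul_left ?_ hs
  simp only [negMulLog]
  nlinarith [mul_le_mul_of_nonneg_left hA (show 0 ≤ s - t by linarith),
    mul_le_mul_of_nonneg_left hB ht.le]

lemma two_mul_negMulLog_le_one {x : ℝ} (hx : 0 ≤ x) : 2 * negMulLog x ≤ 1 := by
  rcases hx.eq_or_lt with rfl | hx
  · simp
  have h := one_sub_inv_le_log_of_pos (by positivity : (0 : ℝ) < 2 * x)
  rw [log_mul two_ne_zero hx.ne'] at h
  have h2 : log 2 ≤ 1 := by linarith [log_le_sub_one_of_pos (two_pos : (0:ℝ) < 2)]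
  have : 2 * x * (1 - (2 * x)⁻¹) = 2 * x - 1 := by field_simp
  simp only [negMulLog]
  nlinarith [mul_le_mul_of_nonneg_left h (by positivity : (0:ℝ) ≤ 2 * x)]

lemma negMulLog_le_sqrt {x : ℝ} (hx : 0 ≤ x) : negMulLog x ≤ √x := by
  have h := negMulLog_mul √x √x
  rw [mul_self_sqrt hx] at h
  nlinarith [two_mul_negMulLog_le_one (sqrt_nonneg x), sqrt_nonneg x]

lemma abs_negMulLog_sub_le {a b : ℝ} (ha : 0 ≤ a) (hb : 0 ≤ b) (ha1 : a ≤ 1) (hb1 : b ≤ 1)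
    (hab : |a - b| ≤ 1 / 2) : |negMulLog a - negMulLog b| ≤ negMulLog |a - b| := by
  wlog h : a ≤ b generalizing a b
  · rw [abs_sub_comm] at hab ⊢
    rw [abs_sub_comm a]
    exact this hb ha hb1 ha1 hab (le_of_not_ge h)
  obtain ⟨t, ht, rfl⟩ : ∃ t, 0 ≤ t ∧ b = a + t := ⟨b - a, by linarith, by ring⟩
  rw [show a - (a + t) = -t by ring, abs_neg, abs_of_nonneg ht] at hab ⊢
  rw [abs_sub_le_iff]
  constructor
  · have h := concaveOn_negMulLog.map_add_sub_map_le (x := a) (y := 1 - t) ha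
      (by simp) (by linarith) ht
    rw [sub_add_cancel, negMulLog_one] at h
    linarith [negMulLog_one_sub_le ht hab]
  · have h := concaveOn_negMulLog.map_add_sub_map_le (x := 0) (y := a) Set.self_mem_Ici
      (show 0 ≤ a + t by linarith) ha ht
    rw [zero_add, negMulLog_zero] at h
    linarith

lemma sum_negMulLog_le_sqrt_card_mul_sum {ι : Type*} (s : Finset ι) {t : ι → ℝ}
    (ht : ∀ i, 0 ≤ t i) : ∑ i ∈ s, negMulLog (t i) ≤ √(#s * ∑ i ∈ s, t i) :=
  calc ∑ i ∈ s, negMulLog (t i) ≤ ∑ i ∈ s, √1 * √(t i) := by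
        simpa using sum_le_sum fun i _ ↦ negMulLog_le_sqrt (ht i)
    _ ≤ √(∑ i ∈ s, 1) * √(∑ i ∈ s, t i) :=
        sum_sqrt_mul_sqrt_le s (fun _ ↦ zero_le_one) ht
    _ = √(#s * ∑ i ∈ s, t i) := by simp [sqrt_mul]

theorem stmt_8_general {α : Type*} [Fintype α] (n : ℕ) (hcard : Fintype.card α = n)
    (p q : α → ℝ) (hp0 : ∀ i, 0 ≤ p i) (hq0 : ∀ i, 0 ≤ q i)
    (hp1 : ∑ i, p i = 1) (hq1 : ∑ i, q i = 1)
    (δ : ℝ) (hδ1 : δ ≤ 1 / 2)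
    (hdist : ∑ i, |p i - q i| ≤ δ) :
    |(∑ i, Real.negMulLog (p i)) - ∑ i, Real.negMulLog (q i)| ≤ Real.sqrt (δ * n) := by
  have hp_le (i : α) : p i ≤ 1 := (single_le_sum (fun j _ ↦ hp0 j) (mem_univ i)).trans_eq hp1
  have hq_le (i : α) : q i ≤ 1 := (single_le_sum (fun j _ ↦ hq0 j) (mem_univ i)).trans_eq hq1
  have hpq_le (i : α) : |p i - q i| ≤ 1 / 2 :=
    ((single_le_sum (fun j _ ↦ abs_nonneg (p j - q j)) (mem_univ i)).trans hdist).trans hδ1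
  calc |(∑ i, negMulLog (p i)) - ∑ i, negMulLog (q i)|
      ≤ ∑ i, |negMulLog (p i) - negMulLog (q i)| := by
        rw [← sum_sub_distrib]; exact abs_sum_le_sum_abs _ _
    _ ≤ ∑ i, negMulLog |p i - q i| := sum_le_sum fun i _ ↦
        abs_negMulLog_sub_le (hp0 i) (hq0 i) (hp_le i) (hq_le i) (hpq_le i)
    _ ≤ √(#univ * ∑ i, |p i - q i|) :=
        sum_negMulLog_le_sqrt_card_mul_sum _ fun i ↦ abs_nonneg _
    _ ≤ √(δ * n) := by
        rw [card_univ, hcard, mul_comm]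
        gcongr

/-- Fannes-type continuity of entropy (intermediate claim in the proof of Lemma 7):
an ℓ₁ error of δ ≤ 1/2 between two probability vectors on n ≥ 2 points yields an entropy
error of at most √(δ·n). -/
theorem stmt_8 {α : Type*} [Fintype α] (n : ℕ) (hcard : Fintype.card α = n) (hn : 2 ≤ n)
    (p q : α → ℝ) (hp0 : ∀ i, 0 ≤ p i) (hq0 : ∀ i, 0 ≤ q i)
    (hp1 : ∑ i, p i = 1) (hq1 : ∑ i, q i = 1)
    (δ : ℝ) (hδ0 : 0 ≤ δ) (hδ1 : δ ≤ 1 / 2)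
    (hdist : ∑ i, |p i - q i| ≤ δ) :
    |(∑ i, Real.negMulLog (p i)) - ∑ i, Real.negMulLog (q i)| ≤ Real.sqrt (δ * n) :=
  stmt_8_general n hcard p q hp0 hq0 hp1 hq1 δ hδ1 hdist
end

section
/- Let A, B, C be finite nonempty types and p : B × C × A → ℝ a strictly positive probability mass function, with marginals p_{BC}, p_B, conditionals p(a|b), p(a|b,c), p(c|b) = p_{BC}(b,c)/p_B(b), and conditional entropies H(A|B), H(A|B,C) defined as usual. Then: (i) if p(a|b,c) = p(a|b) for all (a,b,c), then H(A|B,C) = H(A|B); and (ii) if there exist q > 0 and ε′ > 0 such that for every b there exists c with p(c|b) ≥ q and Σ_a |p(a|b,c) − p(a|b)| ≥ √ε′, then H(A|B) − H(A|B,C) ≥ (1/2)·q·ε′. -/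
/-- Marginal of `p` on the pair (B, C). -/
noncomputable def pBC {A B C : Type*} [Fintype A] (p : B × C × A → ℝ) (b : B) (c : C) : ℝ :=
  ∑ a, p (b, c, a)

/-- Marginal of `p` on B. -/
noncomputable def pB {A B C : Type*} [Fintype A] [Fintype C] (p : B × C × A → ℝ) (b : B) : ℝ :=
  ∑ c, ∑ a, p (b, c, a)

/-- Marginal of `p` on the pair (B, A). -/
noncomputable def pBA {A B C : Type*} [Fintype C] (p : B × C × A → ℝ) (b : B) (a : A) : ℝ :=
  ∑ c, p (b, c, a)

/-- Conditional probability p(a | b). -/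
noncomputable def condAgivenB {A B C : Type*} [Fintype A] [Fintype C]
    (p : B × C × A → ℝ) (b : B) (a : A) : ℝ :=
  pBA p b a / pB p b

/-- Conditional probability p(a | b, c). -/
noncomputable def condAgivenBC {A B C : Type*} [Fintype A]
    (p : B × C × A → ℝ) (b : B) (c : C) (a : A) : ℝ :=
  p (b, c, a) / pBC p b c

/-- Conditional probability p(c | b). -/
noncomputable def condCgivenB {A B C : Type*} [Fintype A] [Fintype C]
    (p : B × C × A → ℝ) (b : B) (c : C) : ℝ :=
  pBC p b c / pB p b

/-- Conditional entropy H(A | B). -/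
noncomputable def HAgivenB {A B C : Type*} [Fintype A] [Fintype B] [Fintype C]
    (p : B × C × A → ℝ) : ℝ :=
  -∑ b, ∑ a, pBA p b a * Real.log (condAgivenB p b a)

/-- Conditional entropy H(A | B, C). -/
noncomputable def HAgivenBC {A B C : Type*} [Fintype A] [Fintype B] [Fintype C]
    (p : B × C × A → ℝ) : ℝ :=
  -∑ b, ∑ c, ∑ a, p (b, c, a) * Real.log (condAgivenBC p b c a)

/-!
Conditioning additionally on `C` lowers the conditional entropy by exactly
`H(A|B) - H(A|B,C) = ∑_{b,c} p(b,c) · KL(p(·|b,c) ‖ p(·|b))`.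
If the conditional laws agree, every divergence vanishes. Otherwise Pinsker's inequality
`KL(P ‖ Q) ≥ ½ ‖P - Q‖₁²` bounds the divergence at the distinguished `c` of each `b` by `ε'/2`,
and that `c` carries mass `p(b,c) ≥ q p(b)`; summing over `b` gives `q ε'/2`.
Pinsker's inequality itself follows from the pointwise bound
`t log t - t + 1 ≥ 3 (t - 1)² / (2t + 4)`, proved by a sign analysis of derivatives around `t = 1`.
-/

open Real Set Finset InformationTheory

lemma le_of_hasDerivAt_of_sub_one_mul_nonneg {f f' : ℝ → ℝ}
    (hf : ∀ t, 0 < t → HasDerivAt f (f' t) t) (hsign : ∀ t, 0 < t → 0 ≤ (t - 1) * f' t)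
    {t : ℝ} (ht : 0 < t) : f 1 ≤ f t := by
  have hcont : ContinuousOn f (Ioi 0) := fun x hx => (hf x hx).continuousAt.continuousWithinAt
  rcases le_total 1 t with h1 | h1
  · refine monotoneOn_of_hasDerivWithinAt_nonneg (f' := f') (convex_Ici 1)
      (hcont.mono fun x hx => mem_Ioi.2 (one_pos.trans_le hx)) (fun x hx => ?_) (fun x hx => ?_)
      (mem_Ici.2 le_rfl) h1 h1
    all_goals rw [interior_Ici] at hx
    · exact (hf x (one_pos.trans hx)).hasDerivWithinAt
    · exact (mul_nonneg_iff_of_pos_left (sub_pos.2 hx)).1 (hsign x (one_pos.trans hx))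
  · refine antitoneOn_of_hasDerivWithinAt_nonpos (f' := f') (convex_Ioc 0 1)
      (hcont.mono fun x hx => hx.1) (fun x hx => ?_) (fun x hx => ?_)
      ⟨ht, h1⟩ ⟨one_pos, le_rfl⟩ h1
    all_goals rw [interior_Ioc] at hx
    · exact (hf x hx.1).hasDerivWithinAt
    · nlinarith [hsign x hx.1, hx.2]

lemma sub_one_mul_add_one_mul_log_sub_nonneg {t : ℝ} (ht : 0 < t) :
    0 ≤ (t - 1) * ((t + 1) * log t - 2 * (t - 1)) := by
  set g : ℝ → ℝ := fun t => (t + 1) * log t - 2 * (t - 1)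
  have hg : ∀ x, 0 < x → HasDerivAt g (log x + (x + 1) * x⁻¹ - 2) x := fun x hx => by
    have h1 : HasDerivAt (fun t => (t + 1) * log t) (1 * log x + (x + 1) * x⁻¹) x :=
      ((hasDerivAt_id' x).add_const 1).mul (hasDerivAt_log hx.ne')
    have h2 : HasDerivAt (fun t => 2 * (t - 1)) (2 * 1) x :=
      ((hasDerivAt_id' x).sub_const 1).const_mul 2
    exact (h1.sub h2).congr_deriv (by ring)
  have hmono : MonotoneOn g (Ioi 0) := by
    refine monotoneOn_of_hasDerivWithinAt_nonneg
      (f' := fun x => log x + (x + 1) * x⁻¹ - 2) (convex_Ioi 0)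
      (fun x hx => (hg x hx).continuousAt.continuousWithinAt) (fun x hx => ?_) (fun x hx => ?_)
    all_goals rw [interior_Ioi] at hx
    · exact (hg x hx).hasDerivWithinAt
    · have := one_sub_inv_le_log_of_pos hx
      rw [add_mul, mul_inv_cancel₀ hx.ne']
      linarith
  have hg1 : g 1 = 0 := by simp [g]
  rcases le_total 1 t with h1 | h1
  · exact mul_nonneg (sub_nonneg.2 h1) (hg1 ▸ hmono (mem_Ioi.2 one_pos) ht h1)
  · exact mul_nonneg_of_nonpos_of_nonpos (sub_nonpos.2 h1) (hg1 ▸ hmono ht (mem_Ioi.2 one_pos) h1)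

lemma three_mul_sq_sub_one_le_mul_klFun {t : ℝ} (ht : 0 < t) :
    3 * (t - 1) ^ 2 ≤ (2 * t + 4) * klFun t := by
  set F : ℝ → ℝ := fun t => (2 * t + 4) * klFun t - 3 * (t - 1) ^ 2
  have hF : ∀ x, 0 < x → HasDerivAt F (4 * ((x + 1) * log x - 2 * (x - 1))) x := fun x hx => by
    refine ((((hasDerivAt_id x).const_mul 2).add_const 4).mul (hasDerivAt_klFun hx.ne')).sub
      ((((hasDerivAt_id x).sub_const 1).pow 2).const_mul 3) |>.congr_deriv ?_
    simp only [klFun_apply, id]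
    ring
  have := le_of_hasDerivAt_of_sub_one_mul_nonneg hF (fun x hx => by
    nlinarith [sub_one_mul_add_one_mul_log_sub_nonneg hx]) ht
  simp only [F, klFun_one] at this
  linarith

lemma three_mul_sq_sub_le_mul_mul_log_div_sub_add {x y : ℝ} (hx : 0 < x) (hy : 0 < y) :
    3 * (x - y) ^ 2 ≤ (2 * x + 4 * y) * (x * log (x / y) - x + y) := by
  calc 3 * (x - y) ^ 2 = y ^ 2 * (3 * (x / y - 1) ^ 2) := by
        field_simp
    _ ≤ y ^ 2 * ((2 * (x / y) + 4) * klFun (x / y)) :=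
        mul_le_mul_of_nonneg_left (three_mul_sq_sub_one_le_mul_klFun (div_pos hx hy)) (sq_nonneg y)
    _ = (2 * x + 4 * y) * (x * log (x / y) - x + y) := by
        rw [klFun_apply]; field_simp; ring

noncomputable def klDivergence {α : Type*} [Fintype α] (P Q : α → ℝ) : ℝ :=
  ∑ a, P a * log (P a / Q a)

lemma klDivergence_self {α : Type*} [Fintype α] (P : α → ℝ) : klDivergence P P = 0 := by
  refine sum_eq_zero fun a _ => ?_
  by_cases h : P a = 0 <;> simp [h]

lemma half_mul_sq_sum_abs_sub_le_klDivergence {α : Type*} [Fintype α] {P Q : α → ℝ}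
    (hP : ∀ a, 0 < P a) (hQ : ∀ a, 0 < Q a) (hP1 : ∑ a, P a = 1) (hQ1 : ∑ a, Q a = 1) :
    1 / 2 * (∑ a, |P a - Q a|) ^ 2 ≤ klDivergence P Q := by
  -- Cauchy–Schwarz with the weights `2 P + 4 Q`, whose total mass `6` produces the constant `1/2`.
  have hw : ∀ a, 0 < 2 * P a + 4 * Q a := fun a => by linarith [hP a, hQ a]
  have hw6 : ∑ a, (2 * P a + 4 * Q a) = 6 := by
    rw [sum_add_distrib, ← mul_sum, ← mul_sum, hP1, hQ1]; norm_num
  have hterm : ∀ a, |P a - Q a| ^ 2 / (2 * P a + 4 * Q a)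
      ≤ (P a * log (P a / Q a) - P a + Q a) / 3 := fun a => by
    rw [sq_abs, div_le_div_iff₀ (hw a) three_pos]
    linarith [three_mul_sq_sub_le_mul_mul_log_div_sub_add (hP a) (hQ a)]
  have hsum : ∑ a, (P a * log (P a / Q a) - P a + Q a) = klDivergence P Q := by
    rw [sum_add_distrib, sum_sub_distrib, hP1, hQ1, klDivergence]; ring
  calc 1 / 2 * (∑ a, |P a - Q a|) ^ 2
      = 3 * ((∑ a, |P a - Q a|) ^ 2 / ∑ a, (2 * P a + 4 * Q a)) := by rw [hw6]; ring
    _ ≤ 3 * ∑ a, |P a - Q a| ^ 2 / (2 * P a + 4 * Q a) := by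
        gcongr; exact sq_sum_div_le_sum_sq_div _ _ fun a _ => hw a
    _ ≤ 3 * ∑ a, (P a * log (P a / Q a) - P a + Q a) / 3 := by
        gcongr 3 * ?_; exact sum_le_sum fun a _ => hterm a
    _ = klDivergence P Q := by rw [← sum_div, hsum]; ring

section ConditionalEntropy

variable {A B C : Type*} {p : B × C × A → ℝ}

lemma pBC_pos [Fintype A] [Nonempty A] (hp : ∀ x, 0 < p x) (b : B) (c : C) : 0 < pBC p b c :=
  sum_pos (fun _ _ => hp _) univ_nonempty

lemma pBA_pos [Fintype C] [Nonempty C] (hp : ∀ x, 0 < p x) (b : B) (a : A) : 0 < pBA p b a :=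
  sum_pos (fun _ _ => hp _) univ_nonempty

lemma pB_pos [Fintype A] [Fintype C] [Nonempty A] [Nonempty C] (hp : ∀ x, 0 < p x) (b : B) :
    0 < pB p b :=
  sum_pos (fun c _ => pBC_pos hp b c) univ_nonempty

lemma condAgivenBC_pos [Fintype A] [Nonempty A] (hp : ∀ x, 0 < p x) (b : B) (c : C) (a : A) :
    0 < condAgivenBC p b c a :=
  div_pos (hp _) (pBC_pos hp b c)

lemma condAgivenB_pos [Fintype A] [Fintype C] [Nonempty A] [Nonempty C] (hp : ∀ x, 0 < p x)
    (b : B) (a : A) : 0 < condAgivenB p b a :=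
  div_pos (pBA_pos hp b a) (pB_pos hp b)

lemma sum_condAgivenBC [Fintype A] {b : B} {c : C} (h : pBC p b c ≠ 0) :
    ∑ a, condAgivenBC p b c a = 1 := by
  simp only [condAgivenBC, ← sum_div]
  exact div_self h

lemma sum_condAgivenB [Fintype A] [Fintype C] {b : B} (h : pB p b ≠ 0) :
    ∑ a, condAgivenB p b a = 1 := by
  simp only [condAgivenB, ← sum_div, pBA]
  rw [sum_comm]
  exact div_self h

lemma pBC_mul_condAgivenBC [Fintype A] {b : B} {c : C} (h : pBC p b c ≠ 0) (a : A) :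
    pBC p b c * condAgivenBC p b c a = p (b, c, a) :=
  mul_div_cancel₀ _ h

lemma mul_pB_le_pBC_of_le_condCgivenB [Fintype A] [Fintype C] {b : B} {c : C} {q : ℝ}
    (hb : 0 < pB p b) (h : q ≤ condCgivenB p b c) : q * pB p b ≤ pBC p b c :=
  (le_div_iff₀ hb).1 h

variable [Fintype A] [Fintype B] [Fintype C]

lemma sum_pB : ∑ b, pB p b = ∑ x, p x := by
  simp only [pB, Fintype.sum_prod_type]

lemma HAgivenB_eq_sum : HAgivenB p = -∑ b, ∑ c, ∑ a, p (b, c, a) * log (condAgivenB p b a) := by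
  simp only [HAgivenB, pBA, sum_mul]
  exact congrArg _ (sum_congr rfl fun b _ => sum_comm)

theorem HAgivenB_sub_HAgivenBC [Nonempty A] [Nonempty C] (hp : ∀ x, 0 < p x) :
    HAgivenB p - HAgivenBC p =
      ∑ b, ∑ c, pBC p b c * klDivergence (condAgivenBC p b c) (condAgivenB p b) := by
  rw [HAgivenB_eq_sum, HAgivenBC, neg_sub_neg, ← sum_sub_distrib]
  refine sum_congr rfl fun b _ => ?_
  rw [← sum_sub_distrib]
  refine sum_congr rfl fun c _ => ?_
  rw [klDivergence, mul_sum, ← sum_sub_distrib]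
  refine sum_congr rfl fun a _ => ?_
  rw [← mul_assoc, pBC_mul_condAgivenBC (pBC_pos hp b c).ne',
    log_div (condAgivenBC_pos hp b c a).ne' (condAgivenB_pos hp b a).ne', mul_sub]

theorem HAgivenBC_eq_HAgivenB_of_condAgivenBC_eq [Nonempty A] [Nonempty C] (hp : ∀ x, 0 < p x)
    (h : ∀ a b c, condAgivenBC p b c a = condAgivenB p b a) : HAgivenBC p = HAgivenB p := by
  have hcond : ∀ b c, condAgivenBC p b c = condAgivenB p b := fun b c => funext fun a => h a b c
  have := HAgivenB_sub_HAgivenBC hp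
  simp only [hcond, klDivergence_self, mul_zero, sum_const_zero] at this
  linarith

theorem half_mul_mul_le_HAgivenB_sub_HAgivenBC [Nonempty A] [Nonempty C] (hp : ∀ x, 0 < p x)
    (hsum : ∑ x, p x = 1) {q ε' : ℝ} (hq : 0 ≤ q)
    (h : ∀ b, ∃ c, q ≤ condCgivenB p b c ∧
      √ε' ≤ ∑ a, |condAgivenBC p b c a - condAgivenB p b a|) :
    1 / 2 * q * ε' ≤ HAgivenB p - HAgivenBC p := by
  have hpinsker : ∀ b c, 1 / 2 * (∑ a, |condAgivenBC p b c a - condAgivenB p b a|) ^ 2 ≤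
      klDivergence (condAgivenBC p b c) (condAgivenB p b) := fun b c =>
    half_mul_sq_sum_abs_sub_le_klDivergence (condAgivenBC_pos hp b c) (condAgivenB_pos hp b)
      (sum_condAgivenBC (pBC_pos hp b c).ne') (sum_condAgivenB (pB_pos hp b).ne')
  have hKL_nonneg : ∀ b c, 0 ≤ klDivergence (condAgivenBC p b c) (condAgivenB p b) :=
    fun b c => (hpinsker b c).trans' (by positivity)
  have hb : ∀ b, q * pB p b * (1 / 2 * ε') ≤
      ∑ c, pBC p b c * klDivergence (condAgivenBC p b c) (condAgivenB p b) := by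
    intro b
    obtain ⟨c, hqc, hl1⟩ := h b
    have hε : ε' ≤ (∑ a, |condAgivenBC p b c a - condAgivenB p b a|) ^ 2 :=
      (sqrt_le_left (sum_nonneg fun _ _ => abs_nonneg _)).1 hl1
    calc q * pB p b * (1 / 2 * ε')
        ≤ pBC p b c * klDivergence (condAgivenBC p b c) (condAgivenB p b) :=
          mul_le_mul_of_nonneg (mul_pB_le_pBC_of_le_condCgivenB (pB_pos hp b) hqc)
            ((hpinsker b c).trans' (by linarith))
            (mul_nonneg hq (pB_pos hp b).le) (hKL_nonneg b c)
      _ ≤ _ := single_le_sum (fun c _ => mul_nonneg (pBC_pos hp b c).le (hKL_nonneg b c))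
          (mem_univ c)
  calc 1 / 2 * q * ε' = ∑ b, q * pB p b * (1 / 2 * ε') := by
        rw [← sum_mul, ← mul_sum, sum_pB, hsum]; ring
    _ ≤ _ := sum_le_sum fun b _ => hb b
    _ = _ := (HAgivenB_sub_HAgivenBC hp).symm

end ConditionalEntropy

theorem stmt_12_general {A B C : Type*} [Fintype A] [Fintype B] [Fintype C]
    [Nonempty A] [Nonempty C]
    (p : B × C × A → ℝ) (hp : ∀ x, 0 < p x) (hsum : ∑ x, p x = 1) :
    ((∀ a b c, condAgivenBC p b c a = condAgivenB p b a) → HAgivenBC p = HAgivenB p) ∧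
      (∀ q ε' : ℝ, 0 < q → 0 < ε' →
        (∀ b, ∃ c, q ≤ condCgivenB p b c ∧
          Real.sqrt ε' ≤ ∑ a, |condAgivenBC p b c a - condAgivenB p b a|) →
        HAgivenB p - HAgivenBC p ≥ (1 / 2) * q * ε') :=
  ⟨HAgivenBC_eq_HAgivenB_of_condAgivenBC_eq hp,
    fun _ _ hq _ h => (half_mul_mul_le_HAgivenB_sub_HAgivenBC hp hsum hq.le h).ge⟩

/-- Abstract form of Lemma 3 (non-degeneracy of the conditional entropy drop):
(i) if the conditional laws agree, adding C does not change the conditional entropy;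
(ii) if for every b there is a value c of conditional probability at least q at which the
conditional laws differ by at least √ε′ in ℓ₁, the entropy gap is at least (1/2)·q·ε′. -/
theorem stmt_12 {A B C : Type*} [Fintype A] [Fintype B] [Fintype C]
    [Nonempty A] [Nonempty B] [Nonempty C]
    (p : B × C × A → ℝ) (hp : ∀ x, 0 < p x) (hsum : ∑ x, p x = 1) :
    ((∀ a b c, condAgivenBC p b c a = condAgivenB p b a) → HAgivenBC p = HAgivenB p) ∧
      (∀ q ε' : ℝ, 0 < q → 0 < ε' →
        (∀ b, ∃ c, q ≤ condCgivenB p b c ∧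
          Real.sqrt ε' ≤ ∑ a, |condAgivenBC p b c a - condAgivenB p b a|) →
        HAgivenB p - HAgivenBC p ≥ (1 / 2) * q * ε') :=
  stmt_12_general p hp hsum
end
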